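/- Let f : ℤ_p → ℤ_p be 1-Lipschitz with van der Put coefficients B_m. Then for all n ≥ 2, Σ_{m=p^{n−1}}^{p^n−1} B_m = Σ_{m=0}^{p^n−1} f(m) − p·Σ_{m=0}^{p^{n−1}−1} f(m). -/

import Mathlib

open MeasureTheory Finset

namespace VDP

noncomputable instance (p : ℕ) [Fact p.Prime] : MeasurableSpace ℤ_[p] := borel _
instance (p : ℕ) [Fact p.Prime] : BorelSpace ℤ_[p] := ⟨rfl⟩

/-- The Haar probability measure on `ℤ_[p]`. -/
noncomputable def haarZp (p : ℕ) [Fact p.Prime] : Measure ℤ_[p] :=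
  Measure.addHaarMeasure ⊤

/-- `f` is 1-Lipschitz. -/
def IsLip (p : ℕ) [Fact p.Prime] (f : ℤ_[p] → ℤ_[p]) : Prop :=
  ∀ x y : ℤ_[p], ‖f x - f y‖ ≤ ‖x - y‖

/-- The van der Put basis function `χ(m, x)` on `ℤ_[p]` (with `⌊log_p 0⌋ = 0`). -/
noncomputable def chi (p : ℕ) [Fact p.Prime] (m : ℕ) (x : ℤ_[p]) : ℤ_[p] :=
  if ‖x - (m : ℤ_[p])‖ ≤ ((p : ℝ) ^ (Nat.log p m + 1))⁻¹ then 1 else 0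

/-- `q(m) = m_s p^s`, the leading term of the `p`-adic expansion of `m`. -/
def q (p m : ℕ) : ℕ := m / p ^ Nat.log p m * p ^ Nat.log p m

/-- `f` has van der Put expansion with coefficients `B`. -/
def vdpExpansion (p : ℕ) [Fact p.Prime] (f : ℤ_[p] → ℤ_[p]) (B : ℕ → ℤ_[p]) : Prop :=
  ∀ x, f x = ∑' m, B m * chi p m x

/-- `f` is bijective modulo `p^n`. -/
def BijModPow (p : ℕ) [Fact p.Prime] (f : ℤ_[p] → ℤ_[p]) (n : ℕ) : Prop :=
  Function.Bijective fun a : ZMod (p ^ n) => PadicInt.toZModPow n (f ((a.val : ℕ) : ℤ_[p]))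

/-- `f` is transitive modulo `p^n`. -/
def TransModPow (p : ℕ) [Fact p.Prime] (f : ℤ_[p] → ℤ_[p]) (n : ℕ) : Prop :=
  ∀ x : ℤ_[p], ∀ a : ZMod (p ^ n), ∃ k : ℕ, PadicInt.toZModPow n (f^[k] x) = a

/-- The `i`-th digit of the canonical `p`-adic expansion of `x`. -/
noncomputable def digit (p : ℕ) [Fact p.Prime] (x : ℤ_[p]) (i : ℕ) : ℕ :=
  x.appr (i + 1) / p ^ i % p

end VDP

/-! For `m < p ^ (n + 1)` only the coefficients `B k` with `k < p ^ (n + 1)` contribute to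
`f m`, and `χ(k, ·)` is the indicator of the residue class of `k` modulo `p ^ (log_p k + 1)`, which
meets `[0, p ^ (n + 1))` in `p ^ (n - log_p k)` points. Hence
`S (n + 1) := ∑_{m < p ^ (n + 1)} f m = ∑_{k < p ^ (n + 1)} B k * p ^ (n - log_p k)`, and in
`S (n + 2) - p * S (n + 1)` only the terms with `log_p k = n + 1` survive. -/

namespace VDP

open Finset

variable {p : ℕ} [Fact p.Prime]

theorem chi_natCast (k m : ℕ) :
    chi p k (m : ℤ_[p]) = if k ≡ m [MOD p ^ (Nat.log p k + 1)] then 1 else 0 := by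
  have hsub : (m : ℤ_[p]) - k = ((m - k : ℤ) : ℤ_[p]) := by push_cast; rfl
  rw [chi, hsub, ← zpow_natCast, ← zpow_neg]
  congr 1
  rw [PadicInt.norm_int_le_pow_iff_dvd, Nat.modEq_iff_dvd]
  push_cast
  rfl

theorem chi_natCast_eq_zero {n k m : ℕ} (hm : m < p ^ n) (hk : p ^ n ≤ k) :
    chi p k (m : ℤ_[p]) = 0 := by
  have hk_lt : k < p ^ (Nat.log p k + 1) := Nat.lt_pow_succ_log_self (Fact.out : p.Prime).one_lt k
  rw [chi_natCast, if_neg]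
  intro h
  have := h.eq_of_lt_of_lt hk_lt (by omega)
  omega

theorem sum_range_chi_natCast {n k : ℕ} (hk : k < p ^ (n + 1)) :
    ∑ m ∈ range (p ^ (n + 1)), chi p k (m : ℤ_[p]) = (p : ℤ_[p]) ^ (n - Nat.log p k) := by
  have hpos : 0 < p ^ (Nat.log p k + 1) := pow_pos (Fact.out : p.Prime).pos _
  have hsplit : p ^ (n + 1) = p ^ (Nat.log p k + 1) * p ^ (n - Nat.log p k) := by
    rw [← pow_add]
    have := Nat.log_lt_of_lt_pow' n.succ_ne_zero hk
    congr 1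
    omega
  have hcount : #{m ∈ range (p ^ (n + 1)) | k ≡ m [MOD p ^ (Nat.log p k + 1)]} =
      p ^ (n - Nat.log p k) := by
    simp_rw [Nat.ModEq.comm (a := k), ← Nat.count_eq_card_filter_range,
      Nat.count_modEq_card _ hpos, hsplit, Nat.mul_mod_right, Nat.not_lt_zero, if_false,
      Nat.mul_div_cancel_left _ hpos, add_zero]
  simp_rw [chi_natCast, sum_boole, hcount]
  push_cast
  rfl

theorem sum_range_eq_sum_mul_pow {f : ℤ_[p] → ℤ_[p]} {B : ℕ → ℤ_[p]}
    (hB : vdpExpansion p f B) (n : ℕ) :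
    ∑ m ∈ range (p ^ (n + 1)), f (m : ℤ_[p]) =
      ∑ k ∈ range (p ^ (n + 1)), B k * (p : ℤ_[p]) ^ (n - Nat.log p k) := by
  have hfinite : ∀ m ∈ range (p ^ (n + 1)),
      f (m : ℤ_[p]) = ∑ k ∈ range (p ^ (n + 1)), B k * chi p k (m : ℤ_[p]) := by
    intro m hm
    rw [hB]
    refine tsum_eq_sum fun k hk => ?_
    rw [chi_natCast_eq_zero (mem_range.mp hm) (by simpa using hk), mul_zero]
  rw [sum_congr rfl hfinite, sum_comm]
  refine sum_congr rfl fun k hk => ?_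
  rw [← mul_sum, sum_range_chi_natCast (mem_range.mp hk)]

theorem sum_Ico_coeff_eq {f : ℤ_[p] → ℤ_[p]} {B : ℕ → ℤ_[p]}
    (hB : vdpExpansion p f B) (n : ℕ) :
    ∑ k ∈ Ico (p ^ (n + 1)) (p ^ (n + 2)), B k =
      ∑ m ∈ range (p ^ (n + 2)), f (m : ℤ_[p]) -
        p * ∑ m ∈ range (p ^ (n + 1)), f (m : ℤ_[p]) := by
  have hp : 1 < p := (Fact.out : p.Prime).one_lt
  have hlow : ∀ k ∈ range (p ^ (n + 1)),
      p * (B k * (p : ℤ_[p]) ^ (n - Nat.log p k)) = B k * (p : ℤ_[p]) ^ (n + 1 - Nat.log p k) := by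
    intro k hk
    have := Nat.log_lt_of_lt_pow' n.succ_ne_zero (mem_range.mp hk)
    rw [show n + 1 - Nat.log p k = n - Nat.log p k + 1 by omega, pow_succ]
    ring
  have hhigh : ∀ k ∈ Ico (p ^ (n + 1)) (p ^ (n + 2)),
      B k * (p : ℤ_[p]) ^ (n + 1 - Nat.log p k) = B k := by
    intro k hk
    rw [mem_Ico] at hk
    rw [Nat.log_eq_of_pow_le_of_lt_pow hk.1 hk.2, Nat.sub_self, pow_zero, mul_one]
  rw [sum_range_eq_sum_mul_pow hB, sum_range_eq_sum_mul_pow hB, mul_sum, sum_congr rfl hlow,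
    ← sum_range_add_sum_Ico _ (Nat.pow_le_pow_right hp.le (n + 1).le_succ),
    sum_congr rfl hhigh, add_sub_cancel_left]

end VDP

open VDP Finset in
theorem stmt14_general (p : ℕ) [Fact p.Prime] (f : ℤ_[p] → ℤ_[p]) (B : ℕ → ℤ_[p])
    (hB : vdpExpansion p f B) :
    ∀ n : ℕ, 2 ≤ n →
      ∑ m ∈ Finset.Ico (p ^ (n - 1)) (p ^ n), B m =
        (∑ m ∈ Finset.range (p ^ n), f (m : ℤ_[p])) -
          (p : ℤ_[p]) * ∑ m ∈ Finset.range (p ^ (n - 1)), f (m : ℤ_[p]) := by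
  intro n hn
  obtain ⟨N, rfl⟩ := Nat.exists_eq_add_of_le' hn
  exact sum_Ico_coeff_eq hB N

open VDP Finset in
theorem stmt14 (p : ℕ) [Fact p.Prime] (f : ℤ_[p] → ℤ_[p]) (B : ℕ → ℤ_[p])
    (hf : IsLip p f) (hB : vdpExpansion p f B) :
    ∀ n : ℕ, 2 ≤ n →
      ∑ m ∈ Finset.Ico (p ^ (n - 1)) (p ^ n), B m =
        (∑ m ∈ Finset.range (p ^ n), f (m : ℤ_[p])) -
          (p : ℤ_[p]) * ∑ m ∈ Finset.range (p ^ (n - 1)), f (m : ℤ_[p]) :=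
  stmt14_general p f B hB
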